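/- For every real a, every real x, and every nonnegative integer n, the classical Charlier polynomial y = C_n^{(a)} satisfies the difference equation x ∑_{i=1}^{n} (−1)^i Δ^i y(x) + a Δy(x) + n y(x) = 0 (the sum is finite since Δ^i y = 0 for i > n). -/
import Mathlib


/-- Generalized binomial coefficient `x(x-1)⋯(x-k+1)/k!`. -/
noncomputable def genChoose (x : ℝ) (k : ℕ) : ℝ :=
  (∏ j ∈ Finset.range k, (x - (j : ℝ))) / (Nat.factorial k : ℝ)

/-- The Charlier polynomial `C_n^{(a)}(x) = ∑_{k=0}^n (x choose k) (-a)^{n-k}/(n-k)!`. -/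
noncomputable def charlier (a : ℝ) (n : ℕ) (x : ℝ) : ℝ :=
  ∑ k ∈ Finset.range (n + 1),
    genChoose x k * (-a) ^ (n - k) / (Nat.factorial (n - k) : ℝ)

/-- Charlier polynomial with integer index, with the convention `C_{-1}^{(a)} ≡ 0`. -/
noncomputable def charlierZ (a : ℝ) (n : ℤ) (x : ℝ) : ℝ :=
  if 0 ≤ n then charlier a n.toNat x else 0

/-- Forward difference operator `Δf(x) = f(x+1) - f(x)`. -/
def fdiff (f : ℝ → ℝ) : ℝ → ℝ := fun x => f (x + 1) - f x

/-- Backward difference operator `∇f(x) = f(x) - f(x-1)`. -/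
def bdiff (f : ℝ → ℝ) : ℝ → ℝ := fun x => f x - f (x - 1)

/-- The generalized Charlier polynomial
`C_n^{a,N}(x) = [1 + N(-1)^n C_n^{(a)}(-1)] C_n^{(a)}(x) - N(-1)^n C_n^{(a)}(0) C_n^{(a)}(x-1)`. -/
noncomputable def genCharlier (a N : ℝ) (n : ℕ) (x : ℝ) : ℝ :=
  (1 + N * (-1) ^ n * charlier a n (-1)) * charlier a n x
    - N * (-1) ^ n * charlier a n 0 * charlier a n (x - 1)

/-- The coefficient `A_i(x)` (for `i ≥ 1`) of the difference equation. -/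
noncomputable def Acoef (a : ℝ) (i : ℕ) (x : ℝ) : ℝ :=
  ∑ k ∈ Finset.Icc 1 i, (-1 : ℝ) ^ k * charlier (-a) (i - k) (-x + 1) *
    (charlier a k (-1) * charlier a k (x - 2) - charlier a k (-2) * charlier a k (x - 1))

/-- The coefficient `A_0 = (-1)^{n-1} C_{n-1}^{(a)}(-2)` (with `C_{-1}^{(a)} ≡ 0`). -/
noncomputable def A0coef (a : ℝ) (n : ℕ) : ℝ :=
  (-1 : ℝ) ^ ((n : ℤ) - 1) * charlierZ a ((n : ℤ) - 1) (-2)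

lemma genChoose_zero (x : ℝ) : genChoose x 0 = 1 := by
  simp [genChoose]

lemma genChoose_succ_diff (x : ℝ) (k : ℕ) :
    genChoose (x + 1) (k + 1) - genChoose x (k + 1) = genChoose x k := by
  have h1 : ∏ j ∈ Finset.range (k + 1), (x + 1 - (j : ℝ)) =
      (∏ j ∈ Finset.range k, (x - (j : ℝ))) * (x + 1) := by
    rw [Finset.prod_range_succ']
    push_cast
    ring_nf
  have h2 : ∏ j ∈ Finset.range (k + 1), (x - (j : ℝ)) =
      (∏ j ∈ Finset.range k, (x - (j : ℝ))) * (x - k) := Finset.prod_range_succ _ _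
  have hf : (Nat.factorial (k+1) : ℝ) = (k+1) * Nat.factorial k := by
    push_cast [Nat.factorial_succ]; ring
  have hk : (Nat.factorial k : ℝ) ≠ 0 := Nat.cast_ne_zero.mpr (Nat.factorial_ne_zero k)
  have hk1 : (k : ℝ) + 1 ≠ 0 := by positivity
  simp only [genChoose, h1, h2, hf]
  field_simp
  ring

lemma genChoose_mul (x : ℝ) (k : ℕ) :
    x * genChoose (x - 1) k = (k + 1 : ℝ) * genChoose x (k + 1) := by
  have h1 : ∏ j ∈ Finset.range (k + 1), (x - (j : ℝ)) =
      x * ∏ j ∈ Finset.range k, (x - 1 - (j : ℝ)) := by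
    rw [Finset.prod_range_succ', Nat.cast_zero, sub_zero, mul_comm]
    congr 1
    apply Finset.prod_congr rfl; intro j _; push_cast; ring
  have hf : (Nat.factorial (k+1) : ℝ) = (k+1) * Nat.factorial k := by
    push_cast [Nat.factorial_succ]; ring
  have hk : (Nat.factorial k : ℝ) ≠ 0 := Nat.cast_ne_zero.mpr (Nat.factorial_ne_zero k)
  have hk1 : (k : ℝ) + 1 ≠ 0 := by positivity
  simp only [genChoose, h1, hf]
  field_simp

lemma charlier_zero (a x : ℝ) : charlier a 0 x = 1 := by
  simp [charlier, genChoose]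

lemma fdiff_charlier (a : ℝ) (n : ℕ) :
    fdiff (charlier a (n + 1)) = charlier a n := by
  funext x
  simp only [fdiff, charlier, ← Finset.sum_sub_distrib]
  rw [Finset.sum_range_succ']
  simp only [genChoose_zero, sub_self, zero_div, add_zero]
  apply Finset.sum_congr rfl
  intro k _
  rw [Nat.succ_sub_succ (n) (k), div_sub_div_same, ← sub_mul,
    genChoose_succ_diff]

lemma fdiff_iter_charlier (a : ℝ) (m i : ℕ) :
    fdiff^[i] (charlier a (m + i)) = charlier a m := by
  induction i with
  | zero => rfl
  | succ i ih =>
      rw [Function.iterate_succ_apply, show m + (i+1) = (m + i) + 1 from rfl,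
        fdiff_charlier, ih]

lemma charlier_bdiff (a : ℝ) (n : ℕ) (x : ℝ) :
    charlier a (n + 1) x - charlier a (n + 1) (x - 1) = charlier a n (x - 1) := by
  have := congrFun (fdiff_charlier a n) (x - 1)
  simp only [fdiff, sub_add_cancel] at this
  linarith

lemma charlier_sum_alt' (a : ℝ) (m : ℕ) (x : ℝ) :
    ∑ j ∈ Finset.range (m + 1), (-1 : ℝ) ^ (j + 1) * charlier a (m - j) x
      = -charlier a m (x - 1) := by
  induction m with
  | zero => simp [charlier_zero]
  | succ m ih =>
      rw [Finset.sum_range_succ']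
      have h1 : ∑ j ∈ Finset.range (m + 1),
          (-1:ℝ) ^ (j + 1 + 1) * charlier a (m + 1 - (j + 1)) x
          = -∑ j ∈ Finset.range (m + 1), (-1:ℝ) ^ (j + 1) * charlier a (m - j) x := by
        rw [← Finset.sum_neg_distrib]
        apply Finset.sum_congr rfl
        intro j _
        have : m + 1 - (j + 1) = m - j := by omega
        rw [this]; ring
      rw [h1, ih]
      have h2 := charlier_bdiff a m x
      simp only [pow_one, Nat.sub_zero, zero_add]
      linarith

lemma sum_Icc_one_shift (f : ℕ → ℝ) (m : ℕ) :
    ∑ i ∈ Finset.Icc 1 (m + 1), f i = ∑ j ∈ Finset.range (m + 1), f (j + 1) := by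
  induction m with
  | zero => simp
  | succ m ih =>
      rw [Finset.sum_Icc_succ_top (by omega : 1 ≤ m + 1 + 1), ih]
      rw [Finset.sum_range_succ (fun j => f (j + 1)) (m + 1)]

lemma charlier_sum_alt (a : ℝ) (m : ℕ) (x : ℝ) :
    ∑ i ∈ Finset.Icc 1 (m + 1), (-1 : ℝ) ^ i * charlier a (m + 1 - i) x
      = -charlier a m (x - 1) := by
  rw [sum_Icc_one_shift, ← charlier_sum_alt' a m x]
  apply Finset.sum_congr rfl
  intro i _
  have h : m + 1 - (i + 1) = m - i := by omega
  rw [h]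

lemma fact_cast (n k : ℕ) (h : k ≤ n) :
    (Nat.factorial (n + 1 - k) : ℝ) = ((n : ℝ) + 1 - k) * (Nat.factorial (n - k) : ℝ) := by
  have h1 : n + 1 - k = (n - k) + 1 := by omega
  rw [h1, Nat.factorial_succ]
  push_cast [Nat.cast_sub h]
  ring

lemma charlier_rec (a : ℝ) (n : ℕ) (x : ℝ) :
    ((n : ℝ) + 1) * charlier a (n + 1) x
      = x * charlier a n (x - 1) - a * charlier a n x := by
  set t : ℕ → ℝ := fun k =>
    genChoose x k * (-a) ^ (n + 1 - k) / (Nat.factorial (n + 1 - k) : ℝ) with ht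
  have key1 : ∑ k ∈ Finset.range (n + 2), ((n : ℝ) + 1 - k) * t k
      = -(a * charlier a n x) := by
    rw [Finset.sum_range_succ]
    have htop : ((n : ℝ) + 1 - (n + 1 : ℕ)) * t (n + 1) = 0 := by
      push_cast; ring
    rw [htop, add_zero, charlier, Finset.mul_sum, ← Finset.sum_neg_distrib]
    apply Finset.sum_congr rfl
    intro k hk
    have hkn : k ≤ n := by
      have := Finset.mem_range.mp hk; omega
    have hfz : (Nat.factorial (n - k) : ℝ) ≠ 0 :=
      Nat.cast_ne_zero.mpr (Nat.factorial_ne_zero _)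
    have hfz1 : ((n : ℝ) + 1 - k) ≠ 0 := by
      have : (k : ℝ) ≤ n := by exact_mod_cast hkn
      intro hc; nlinarith
    have hpow : (-a) ^ (n + 1 - k) = (-a) * (-a) ^ (n - k) := by
      have : n + 1 - k = (n - k) + 1 := by omega
      rw [this, pow_succ]; ring
    rw [ht]
    simp only [fact_cast n k hkn, hpow]
    field_simp
  have key2 : ∑ k ∈ Finset.range (n + 2), (k : ℝ) * t k
      = x * charlier a n (x - 1) := by
    rw [Finset.sum_range_succ']
    simp only [Nat.cast_zero, zero_mul, add_zero]
    rw [charlier, Finset.mul_sum]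
    apply Finset.sum_congr rfl
    intro k _
    have h1 : n + 1 - (k + 1) = n - k := by omega
    rw [ht]
    simp only [h1]
    have h := genChoose_mul x k
    push_cast
    linear_combination (-((-a) ^ (n - k) / (Nat.factorial (n - k) : ℝ))) * h
  have hsplit : ((n : ℝ) + 1) * charlier a (n + 1) x
      = (∑ k ∈ Finset.range (n + 2), ((n : ℝ) + 1 - k) * t k)
        + ∑ k ∈ Finset.range (n + 2), (k : ℝ) * t k := by
    rw [← Finset.sum_add_distrib, charlier, Finset.mul_sum]
    apply Finset.sum_congr rfl
    intro k _
    rw [ht]; ring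
  rw [hsplit, key1, key2]; ring

/-- The classical Charlier polynomial `y = C_n^{(a)}` satisfies the difference
equation `x ∑_{i=1}^n (-1)^i Δ^i y(x) + a Δy(x) + n y(x) = 0`. -/
theorem charlier_infinite_order_difference_equation (a x : ℝ) (n : ℕ) :
    x * ∑ i ∈ Finset.Icc 1 n, (-1 : ℝ) ^ i * fdiff^[i] (charlier a n) x
      + a * fdiff (charlier a n) x + (n : ℝ) * charlier a n x = 0 := by
  cases n with
  | zero =>
      simp [fdiff, charlier_zero]
  | succ m =>
      have hsum : ∑ i ∈ Finset.Icc 1 (m + 1), (-1 : ℝ) ^ i * fdiff^[i] (charlier a (m + 1)) x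
          = -charlier a m (x - 1) := by
        rw [← charlier_sum_alt a m x]
        apply Finset.sum_congr rfl
        intro i hi
        have hi' : 1 ≤ i ∧ i ≤ m + 1 := Finset.mem_Icc.mp hi
        have h : m + 1 = (m + 1 - i) + i := by omega
        have h2 : fdiff^[i] (charlier a (m + 1)) = charlier a (m + 1 - i) := by
          conv_lhs => rw [h]
          rw [fdiff_iter_charlier]
        rw [h2]
      have hd : fdiff (charlier a (m + 1)) x = charlier a m x := by
        rw [fdiff_charlier]
      rw [hsum, hd]
      have := charlier_rec a m x
      push_cast
      linarith
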